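/- Let K(𝓜) be a Kripke model with classical domains such that there are nodes v, w ∈ K with v < w. If a, b ∈ 𝓜_v and g : a → b is a function that belongs to 𝓜_w but not to 𝓜_v, then K(𝓜) does not force the Exponentiation axiom: K(𝓜) ⊮ ∀x ∀y ∃z ∀f (f ∈ z ↔ f : x → y). -/
import Mathlib


namespace IKP2007

/-! ## Syntax: formulas of the language `{∈, =}` of set theory (de Bruijn indices) -/

inductive SetF : Type where
  | mem : ℕ → ℕ → SetF
  | eq  : ℕ → ℕ → SetF
  | bot : SetF
  | and : SetF → SetF → SetF
  | or  : SetF → SetF → SetF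
  | imp : SetF → SetF → SetF
  | ex  : SetF → SetF
  | all : SetF → SetF

namespace SetF

/-- Negation. -/
def neg (φ : SetF) : SetF := .imp φ .bot

/-- Bi-implication. -/
def biimp (φ ψ : SetF) : SetF := .and (.imp φ ψ) (.imp ψ φ)

/-- Lift a variable renaming under one binder. -/
def liftR (f : ℕ → ℕ) : ℕ → ℕ
  | 0 => 0
  | n + 1 => f n + 1

/-- Apply a renaming to the free variables of a formula. -/
def rename (f : ℕ → ℕ) : SetF → SetF
  | mem i j => mem (f i) (f j)
  | eq i j  => eq (f i) (f j)
  | bot => bot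
  | and φ ψ => and (rename f φ) (rename f ψ)
  | or φ ψ  => or (rename f φ) (rename f ψ)
  | imp φ ψ => imp (rename f φ) (rename f ψ)
  | ex φ  => ex (rename (liftR f) φ)
  | all φ => all (rename (liftR f) φ)

/-- Shift all free variables up by one. -/
def shift (φ : SetF) : SetF := rename Nat.succ φ

/-- Instantiate the outermost bound variable (index 0) by the free variable `k`;
to be applied to the body of a quantifier. -/
def instVar (k : ℕ) (φ : SetF) : SetF :=
  rename (fun n => match n with | 0 => k | m + 1 => m) φ

/-- All free variables are `< n`. -/
def ClosedUnder : ℕ → SetF → Prop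
  | n, mem i j => i < n ∧ j < n
  | n, eq i j  => i < n ∧ j < n
  | _, bot => True
  | n, and φ ψ => ClosedUnder n φ ∧ ClosedUnder n ψ
  | n, or φ ψ  => ClosedUnder n φ ∧ ClosedUnder n ψ
  | n, imp φ ψ => ClosedUnder n φ ∧ ClosedUnder n ψ
  | n, ex φ  => ClosedUnder (n + 1) φ
  | n, all φ => ClosedUnder (n + 1) φ

/-- A sentence is a formula without free variables. -/
def Sentence (φ : SetF) : Prop := ClosedUnder 0 φ

/-- The variable `n` occurs freely in the formula. -/
def FreeIn : ℕ → SetF → Prop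
  | n, mem i j => i = n ∨ j = n
  | n, eq i j  => i = n ∨ j = n
  | _, bot => False
  | n, and φ ψ => FreeIn n φ ∨ FreeIn n ψ
  | n, or φ ψ  => FreeIn n φ ∨ FreeIn n ψ
  | n, imp φ ψ => FreeIn n φ ∨ FreeIn n ψ
  | n, ex φ  => FreeIn (n + 1) φ
  | n, all φ => FreeIn (n + 1) φ

end SetF

/-! ## The Δ₀-formulas and the Σ/Π-hierarchy -/

/-- Δ₀-formulas: all quantifiers are bounded. -/
inductive Delta0 : SetF → Prop where
  | mem (i j : ℕ) : Delta0 (SetF.mem i j)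
  | eq (i j : ℕ) : Delta0 (SetF.eq i j)
  | bot : Delta0 SetF.bot
  | and {φ ψ} : Delta0 φ → Delta0 ψ → Delta0 (SetF.and φ ψ)
  | or {φ ψ} : Delta0 φ → Delta0 ψ → Delta0 (SetF.or φ ψ)
  | imp {φ ψ} : Delta0 φ → Delta0 ψ → Delta0 (SetF.imp φ ψ)
  | ball {φ} (k : ℕ) : Delta0 φ → Delta0 (SetF.all (SetF.imp (SetF.mem 0 (k + 1)) φ))
  | bex {φ} (k : ℕ) : Delta0 φ → Delta0 (SetF.ex (SetF.and (SetF.mem 0 (k + 1)) φ))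

mutual
  /-- The Σₙ-formulas of the Lévy hierarchy. -/
  inductive SigmaN : ℕ → SetF → Prop where
    | delta0 {n φ} : Delta0 φ → SigmaN n φ
    | ofPi {n φ} : PiN n φ → SigmaN (n + 1) φ
    | ex {n φ} : SigmaN (n + 1) φ → SigmaN (n + 1) (SetF.ex φ)
  /-- The Πₙ-formulas of the Lévy hierarchy. -/
  inductive PiN : ℕ → SetF → Prop where
    | delta0 {n φ} : Delta0 φ → PiN n φ
    | ofSigma {n φ} : SigmaN n φ → PiN (n + 1) φ
    | all {n φ} : PiN (n + 1) φ → PiN (n + 1) (SetF.all φ)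
end

/-- Σ₃-formulas. -/
def Sigma3 (φ : SetF) : Prop := SigmaN 3 φ

/-! ## Intuitionistic first-order provability (with equality) for the language `{∈,=}` -/

/-- Natural deduction for intuitionistic first-order logic with equality over the
language of set theory.  `Prf Γ φ` means that `φ` is derivable from the set of
hypotheses `Γ`. -/
inductive Prf : Set SetF → SetF → Prop where
  | hyp {Γ φ} : φ ∈ Γ → Prf Γ φ
  | botE {Γ φ} : Prf Γ .bot → Prf Γ φ
  | andI {Γ φ ψ} : Prf Γ φ → Prf Γ ψ → Prf Γ (.and φ ψ)
  | andE₁ {Γ φ ψ} : Prf Γ (.and φ ψ) → Prf Γ φ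
  | andE₂ {Γ φ ψ} : Prf Γ (.and φ ψ) → Prf Γ ψ
  | orI₁ {Γ φ ψ} : Prf Γ φ → Prf Γ (.or φ ψ)
  | orI₂ {Γ φ ψ} : Prf Γ ψ → Prf Γ (.or φ ψ)
  | orE {Γ φ ψ χ} : Prf Γ (.or φ ψ) → Prf (insert φ Γ) χ → Prf (insert ψ Γ) χ → Prf Γ χ
  | impI {Γ φ ψ} : Prf (insert φ Γ) ψ → Prf Γ (.imp φ ψ)
  | impE {Γ φ ψ} : Prf Γ (.imp φ ψ) → Prf Γ φ → Prf Γ ψ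
  | allI {Γ φ} : Prf (SetF.shift '' Γ) φ → Prf Γ (.all φ)
  | allE {Γ φ} (k : ℕ) : Prf Γ (.all φ) → Prf Γ (φ.instVar k)
  | exI {Γ φ} (k : ℕ) : Prf Γ (φ.instVar k) → Prf Γ (.ex φ)
  | exE {Γ φ ψ} : Prf Γ (.ex φ) → Prf (insert φ (SetF.shift '' Γ)) ψ.shift → Prf Γ ψ
  | eqRefl {Γ} (i : ℕ) : Prf Γ (.eq i i)
  | eqSym {Γ i j} : Prf Γ (.eq i j) → Prf Γ (.eq j i)
  | eqTrans {Γ i j k} : Prf Γ (.eq i j) → Prf Γ (.eq j k) → Prf Γ (.eq i k)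
  | eqMemL {Γ i j k} : Prf Γ (.eq i j) → Prf Γ (.mem i k) → Prf Γ (.mem j k)
  | eqMemR {Γ i j k} : Prf Γ (.eq i j) → Prf Γ (.mem k i) → Prf Γ (.mem k j)

/-! ## The axioms of the set theories -/

namespace Axioms

/-- Extensionality: `∀a∀b(∀x(x∈a ↔ x∈b) → a=b)`. -/
def extensionality : SetF :=
  .all (.all (.imp (.all (SetF.biimp (.mem 0 2) (.mem 0 1))) (.eq 1 0)))

/-- Empty set: `∃a ∀x∈a ⊥`. -/
def emptySet : SetF := .ex (.all (.imp (.mem 0 1) .bot))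

/-- Pairing: `∀a∀b∃y∀x(x∈y ↔ (x=a ∨ x=b))`. -/
def pairing : SetF :=
  .all (.all (.ex (.all (SetF.biimp (.mem 0 1) (.or (.eq 0 3) (.eq 0 2))))))

/-- Union: `∀a∃y∀x(x∈y ↔ ∃u(u∈a ∧ x∈u))`. -/
def unionAx : SetF :=
  .all (.ex (.all (SetF.biimp (.mem 0 1) (.ex (.and (.mem 0 3) (.mem 1 0))))))

/-- Power set: `∀a∃y∀x(x∈y ↔ x ⊆ a)`. -/
def powerSet : SetF :=
  .all (.ex (.all (SetF.biimp (.mem 0 1) (.all (.imp (.mem 0 1) (.mem 0 3))))))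

/-- `x_i` is empty. -/
def isEmptyV (i : ℕ) : SetF := .all (.imp (.mem 0 (i + 1)) .bot)

/-- `x_i = x_j ∪ {x_j}` (a Δ₀-property). -/
def isSuccV (i j : ℕ) : SetF :=
  .and (.all (.imp (.mem 0 (i + 1)) (.or (.mem 0 (j + 1)) (.eq 0 (j + 1)))))
  (.and (.all (.imp (.mem 0 (j + 1)) (.mem 0 (i + 1)))) (.mem j i))

/-- `x_i = {∅}` (a Δ₀-property). -/
def isSingEmptyV (i : ℕ) : SetF :=
  .and (.all (.imp (.mem 0 (i + 1)) (isEmptyV 0)))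
       (.ex (.and (.mem 0 (i + 1)) (isEmptyV 0)))

/-- `x_i = 2 = {∅, {∅}}` (a Δ₀-property). -/
def isTwoV (i : ℕ) : SetF :=
  .and (.all (.imp (.mem 0 (i + 1)) (.or (isEmptyV 0) (isSingEmptyV 0))))
  (.and (.ex (.and (.mem 0 (i + 1)) (isEmptyV 0)))
        (.ex (.and (.mem 0 (i + 1)) (isSingEmptyV 0))))

/-- Infinity, as in `IKP`:
`∃x(∅∈x ∧ (∀y∈x  y∪{y}∈x) ∧ (∀y∈x (y=∅ ∨ ∃z∈y y=z∪{z})))`. -/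
def infinityIKP : SetF :=
  .ex (.and (.ex (.and (.mem 0 1) (isEmptyV 0)))
    (.and (.all (.imp (.mem 0 1) (.ex (.and (.mem 0 2) (isSuccV 0 1)))))
          (.all (.imp (.mem 0 1) (.or (isEmptyV 0) (.ex (.and (.mem 0 1) (isSuccV 1 0))))))))

/-- `x_i` is an inductive set: `∅ ∈ x_i ∧ ∀y∈x_i (y∪{y} ∈ x_i)`. -/
def indV (i : ℕ) : SetF :=
  .and (.ex (.and (.mem 0 (i + 1)) (isEmptyV 0)))
       (.all (.imp (.mem 0 (i + 1)) (.ex (.and (.mem 0 (i + 2)) (isSuccV 0 1)))))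

/-- Strong infinity: `∃a(Ind(a) ∧ ∀b(Ind(b) → ∀x∈a (x∈b)))`. -/
def strongInfinity : SetF :=
  .ex (.and (indV 0) (.all (.imp (indV 0) (.all (.imp (.mem 0 2) (.mem 0 1))))))

/-- Infinity, classical version: `∃x(∅∈x ∧ ∀y∈x (y∪{y}∈x))`. -/
def zfInfinity : SetF :=
  .ex (.and (.ex (.and (.mem 0 1) (isEmptyV 0)))
            (.all (.imp (.mem 0 1) (.ex (.and (.mem 0 2) (isSuccV 0 1))))))

/-- Set induction for `φ` (free variable `0` of `φ` is the induction variable):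
`(∀a(∀x∈a φ(x) → φ(a))) → ∀a φ(a)`. -/
def setInd (φ : SetF) : SetF :=
  .imp (.all (.imp (.all (.imp (.mem 0 1) (φ.rename (SetF.liftR Nat.succ)))) φ)) (.all φ)

/-- Separation for `φ` (free variable `0` of `φ` is the separation variable):
`∀a∃y∀x(x∈y ↔ x∈a ∧ φ(x))`. -/
def sep (φ : SetF) : SetF :=
  .all (.ex (.all (SetF.biimp (.mem 0 1)
    (.and (.mem 0 2) (φ.rename (SetF.liftR (· + 2)))))))

/-- Renaming placing `x, y` (variables `0, 1` of `φ`) in the context `[y, x, a, …]`. -/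
def collMap₁ : ℕ → ℕ | 0 => 1 | 1 => 0 | n + 2 => n + 3
/-- Renaming placing `x, y` in the context `[y, x, b, a, …]`. -/
def collMap₂ : ℕ → ℕ | 0 => 1 | 1 => 0 | n + 2 => n + 4
/-- Renaming placing `x, y` in the context `[x, y, b, a, …]`. -/
def collMap₃ : ℕ → ℕ | 0 => 0 | 1 => 1 | n + 2 => n + 4

/-- Collection for `φ(x,y)` (variables `0,1`):
`∀a(∀x∈a ∃y φ(x,y) → ∃b ∀x∈a ∃y∈b φ(x,y))`. -/
def coll (φ : SetF) : SetF :=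
  .all (.imp (.all (.imp (.mem 0 1) (.ex (φ.rename collMap₁))))
       (.ex (.all (.imp (.mem 0 2) (.ex (.and (.mem 0 2) (φ.rename collMap₂)))))))

/-- Strong collection for `φ(x,y)` (variables `0,1`):
`∀a(∀x∈a∃y φ → ∃b(∀x∈a∃y∈b φ ∧ ∀y∈b∃x∈a φ))`. -/
def strongColl (φ : SetF) : SetF :=
  .all (.imp (.all (.imp (.mem 0 1) (.ex (φ.rename collMap₁))))
       (.ex (.and (.all (.imp (.mem 0 2) (.ex (.and (.mem 0 2) (φ.rename collMap₂)))))
                  (.all (.imp (.mem 0 1) (.ex (.and (.mem 0 3) (φ.rename collMap₃))))))))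

/-- Renaming placing `x, y, u` (variables `0,1,2` of `ψ`) in the context `[y,x,u,c,b,a,…]`. -/
def sscMap₁ : ℕ → ℕ | 0 => 1 | 1 => 0 | 2 => 2 | n + 3 => n + 6
/-- Renaming placing `x, y, u` in the context `[y,x,d,u,c,b,a,…]`. -/
def sscMap₂ : ℕ → ℕ | 0 => 1 | 1 => 0 | 2 => 3 | n + 3 => n + 7
/-- Renaming placing `x, y, u` in the context `[x,y,d,u,c,b,a,…]`. -/
def sscMap₃ : ℕ → ℕ | 0 => 0 | 1 => 1 | 2 => 3 | n + 3 => n + 7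

/-- Subset collection for `ψ(x,y,u)` (variables `0,1,2`):
`∀a∀b∃c∀u(∀x∈a∃y∈b ψ → ∃d∈c(∀x∈a∃y∈d ψ ∧ ∀y∈d∃x∈a ψ))`. -/
def subsetColl (ψ : SetF) : SetF :=
  .all (.all (.ex (.all (.imp
    (.all (.imp (.mem 0 4) (.ex (.and (.mem 0 4) (ψ.rename sscMap₁)))))
    (.ex (.and (.mem 0 2)
      (.and (.all (.imp (.mem 0 5) (.ex (.and (.mem 0 2) (ψ.rename sscMap₂)))))
            (.all (.imp (.mem 0 1) (.ex (.and (.mem 0 6) (ψ.rename sscMap₃))))))))))))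

/-- `x_i = {x_j}` (a Δ₀-property). -/
def isSingV (i j : ℕ) : SetF :=
  .and (.all (.imp (.mem 0 (i + 1)) (.eq 0 (j + 1)))) (.mem j i)

/-- `x_i = {x_j, x_k}` (a Δ₀-property). -/
def isUPairV (i j k : ℕ) : SetF :=
  .and (.all (.imp (.mem 0 (i + 1)) (.or (.eq 0 (j + 1)) (.eq 0 (k + 1)))))
  (.and (.mem j i) (.mem k i))

/-- `x_p = ⟨x_a, x_b⟩` (Kuratowski pair). -/
def isOPairV (p a b : ℕ) : SetF :=
  .and (.all (.imp (.mem 0 (p + 1)) (.or (isSingV 0 (a + 1)) (isUPairV 0 (a + 1) (b + 1)))))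
  (.and (.ex (.and (.mem 0 (p + 1)) (isSingV 0 (a + 1))))
        (.ex (.and (.mem 0 (p + 1)) (isUPairV 0 (a + 1) (b + 1)))))

/-- `⟨x_n, x_m⟩ ∈ x_f`, i.e. `x_f(x_n) = x_m` for a function `x_f`. -/
def appV (f n m : ℕ) : SetF := .ex (.and (.mem 0 (f + 1)) (isOPairV 0 (n + 1) (m + 1)))

/-- `x_f : x_a → x_b` : `x_f` is a function from `x_a` to `x_b` (a Δ₀-property). -/
def isFunFromTo (f a b : ℕ) : SetF :=
  .and (.all (.imp (.mem 0 (f + 1))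
          (.ex (.and (.mem 0 (a + 2)) (.ex (.and (.mem 0 (b + 3)) (isOPairV 2 1 0)))))))
  (.and (.all (.imp (.mem 0 (a + 1))
          (.ex (.and (.mem 0 (b + 2)) (.ex (.and (.mem 0 (f + 3)) (isOPairV 0 2 1)))))))
        (.all (.imp (.mem 0 (a + 1)) (.all (.imp (.mem 0 (b + 2)) (.all (.imp (.mem 0 (b + 3))
          (.imp (.and (appV (f + 3) 2 1) (appV (f + 3) 2 0)) (.eq 1 0)))))))))

/-- The exponentiation axiom `Exp`: `∀x∀y∃z∀f(f ∈ z ↔ f : x → y)`. -/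
def expAx : SetF := .all (.all (.ex (.all (SetF.biimp (.mem 0 1) (isFunFromTo 0 3 2)))))

/-- `x_i = ω`: `x_i` is the least inductive set. -/
def isOmegaV (i : ℕ) : SetF :=
  .and (indV i) (.all (.imp (indV 0) (.all (.imp (.mem 0 (i + 2)) (.mem 0 1)))))

/-- Markov's principle:
`∀α : ℕ → 2 (¬∀n∈ℕ α(n)=0 → ∃n∈ℕ α(n)=1)`. -/
def markov : SetF :=
  .all (.imp (isOmegaV 0) (.all (.imp (isTwoV 0) (.all (.imp (isFunFromTo 0 2 1)
    (.imp (SetF.neg (.all (.imp (.mem 0 3) (.ex (.and (isEmptyV 0) (appV 2 1 0))))))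
          (.ex (.and (.mem 0 3) (.ex (.and (isSingEmptyV 0) (appV 2 1 0)))))))))))

/-- The axiom of choice:
`∀a((∀x∈a∀y∈a(x≠y → x∩y=∅)) → ∃b∀x∈a∃!z∈b z∈x)`. -/
def choiceAx : SetF :=
  .all (.imp
    (.all (.imp (.mem 0 1) (.all (.imp (.mem 0 2)
        (.imp (SetF.neg (.eq 1 0)) (.all (.imp (.mem 0 2) (.imp (.mem 0 1) .bot))))))))
    (.ex (.all (.imp (.mem 0 2)
      (.ex (.and (.mem 0 2) (.and (.mem 0 1)
        (.all (.imp (.mem 0 3) (.imp (.mem 0 2) (.eq 0 1)))))))))))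

/-! ### Axiom schemes and theories -/

/-- The set induction scheme. -/
def SetInductionScheme : Set SetF := {F | ∃ φ : SetF, F = setInd φ}

/-- The full separation scheme. -/
def SeparationScheme : Set SetF := {F | ∃ φ : SetF, F = sep φ}

/-- Separation for formulas in a class `C`. -/
def SepScheme (C : Set SetF) : Set SetF := {F | ∃ φ ∈ C, F = sep φ}

/-- The Δ₀- (bounded) separation scheme. -/
def Delta0SeparationScheme : Set SetF := {F | ∃ φ : SetF, Delta0 φ ∧ F = sep φ}

/-- The full collection scheme. -/
def CollectionScheme : Set SetF := {F | ∃ φ : SetF, F = coll φ}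

/-- The Δ₀- (bounded) collection scheme. -/
def Delta0CollectionScheme : Set SetF := {F | ∃ φ : SetF, Delta0 φ ∧ F = coll φ}

/-- The full strong collection scheme. -/
def StrongCollectionScheme : Set SetF := {F | ∃ φ : SetF, F = strongColl φ}

/-- The bounded strong collection scheme (strong collection for Δ₀-formulas). -/
def BoundedStrongCollectionScheme : Set SetF := {F | ∃ φ : SetF, Delta0 φ ∧ F = strongColl φ}

/-- The full subset collection scheme. -/
def SubsetCollectionScheme : Set SetF := {F | ∃ ψ : SetF, F = subsetColl ψ}

/-- The set-bounded subset collection scheme: subset collection for Δ₀-formulas `ψ(x,y,u)`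
in which the variable `u` is set-bounded, i.e. `ψ(x,y,u) → u ∈ t` is intuitionistically
derivable for some variable (term) `t` occurring in `ψ`. -/
def SetBoundedSubsetCollectionScheme : Set SetF :=
  {F | ∃ ψ : SetF, ∃ t : ℕ, Delta0 ψ ∧ SetF.FreeIn t ψ ∧
        Prf ∅ (.imp ψ (.mem 2 t)) ∧ F = subsetColl ψ}

/-- Intuitionistic Kripke–Platek set theory `IKP`. -/
def IKP : Set SetF :=
  {extensionality, emptySet, pairing, unionAx, infinityIKP} ∪
    SetInductionScheme ∪ Delta0SeparationScheme ∪ Delta0CollectionScheme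

/-- `IKP⁺`: `IKP` plus bounded strong collection and set-bounded subset collection. -/
def IKPplus : Set SetF :=
  IKP ∪ BoundedStrongCollectionScheme ∪ SetBoundedSubsetCollectionScheme

/-- The theory `IKP⁺ + MP + AC`. -/
def IKPplusMPAC : Set SetF := IKPplus ∪ {markov, choiceAx}

/-- Constructive Zermelo–Fraenkel set theory `CZF`. -/
def CZF : Set SetF :=
  {extensionality, emptySet, pairing, unionAx, strongInfinity} ∪
    SetInductionScheme ∪ Delta0SeparationScheme ∪ StrongCollectionScheme ∪
    SubsetCollectionScheme

/-- Intuitionistic Zermelo–Fraenkel set theory `IZF`. -/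
def IZF : Set SetF :=
  {extensionality, emptySet, pairing, unionAx, strongInfinity, powerSet} ∪
    SetInductionScheme ∪ SeparationScheme ∪ CollectionScheme

/-- The axioms of classical `ZF`. -/
def ZFAxioms : Set SetF :=
  {extensionality, emptySet, pairing, unionAx, powerSet, zfInfinity} ∪
    SetInductionScheme ∪ SeparationScheme ∪ CollectionScheme

end Axioms


/-! ## Environments -/

/-- Prepend a value to an environment (de Bruijn). -/
def econs {α : Type*} (a : α) (env : ℕ → α) : ℕ → α
  | 0 => a
  | n + 1 => env n

/-! ## Classical (Tarski) satisfaction in a `ZFSet` -/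

/-- `ZFSet` in the lowest universe. -/
abbrev ZSet : Type 1 := ZFSet.{0}


/-- Classical satisfaction of a set-theoretic formula in the transitive domain `M`,
with the true membership and equality relations. -/
def CSat (M : ZSet) : (ℕ → ZSet) → SetF → Prop
  | env, .mem i j => env i ∈ env j
  | env, .eq i j => env i = env j
  | _, .bot => False
  | env, .and φ ψ => CSat M env φ ∧ CSat M env ψ
  | env, .or φ ψ => CSat M env φ ∨ CSat M env ψ
  | env, .imp φ ψ => CSat M env φ → CSat M env ψ
  | env, .ex φ => ∃ a : ZSet, a ∈ M ∧ CSat M (econs a env) φ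
  | env, .all φ => ∀ a : ZSet, a ∈ M → CSat M (econs a env) φ

/-- `M` satisfies `φ` for all parameters from `M`. -/
def ZSatisfies (M : ZSet) (φ : SetF) : Prop :=
  ∀ env : ℕ → ZSet, (∀ n, env n ∈ M) → CSat M env φ

/-- `M` is a (nonempty) model of all axioms of `ZF`. -/
def ModelsZF (M : ZSet) : Prop :=
  (∃ x, x ∈ M) ∧ ∀ φ ∈ Axioms.ZFAxioms, ZSatisfies M φ

/-- `M` is a countable transitive model of `ZFC`. -/
def IsCTMofZFC (M : ZSet) : Prop :=
  M.IsTransitive ∧ {x : ZSet | x ∈ M}.Countable ∧ ModelsZF M ∧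
    ZSatisfies M Axioms.choiceAx

/-- There exists a countable transitive model of `ZFC`. -/
def ExistsCTM : Prop := ∃ M : ZSet, IsCTMofZFC M

/-! ## Kripke semantics for the language of set theory -/

/-- The forcing relation over a Kripke frame `K` with domains `D` and membership
relations `e`. -/
def SForces {K : Type u} [Preorder K] {α : Type v} (D : K → Set α) (e : K → α → α → Prop) :
    K → (ℕ → α) → SetF → Prop
  | v, env, .mem i j => e v (env i) (env j)
  | _, env, .eq i j => env i = env j
  | _, _, .bot => False
  | v, env, .and φ ψ => SForces D e v env φ ∧ SForces D e v env ψ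
  | v, env, .or φ ψ => SForces D e v env φ ∨ SForces D e v env ψ
  | v, env, .imp φ ψ => ∀ w, v ≤ w → SForces D e w env φ → SForces D e w env ψ
  | v, env, .ex φ => ∃ a, a ∈ D v ∧ SForces D e v (econs a env) φ
  | v, env, .all φ => ∀ w, v ≤ w → ∀ a, a ∈ D w → SForces D e w (econs a env) φ

/-- A Kripke model for set theory: a Kripke frame with increasing domains `D_v` and
increasing membership relations `e_v` on `D_v`. -/
structure SetKModel (K : Type u) [Preorder K] (α : Type v) where
  D : K → Set α
  e : K → α → α → Prop
  e_dom : ∀ v a b, e v a b → a ∈ D v ∧ b ∈ D v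
  D_mono : ∀ ⦃v w : K⦄, v ≤ w → D v ⊆ D w
  e_mono : ∀ ⦃v w : K⦄, v ≤ w → ∀ a b, e v a b → e w a b

/-- Forcing in a Kripke model for set theory. -/
def SetKModel.Forces {K : Type u} [Preorder K] {α : Type v} (M : SetKModel K α)
    (v : K) (env : ℕ → α) (φ : SetF) : Prop :=
  SForces M.D M.e v env φ

/-! ## Kripke models with classical domains -/

/-- A sound assignment: an assignment of transitive models of `ZF` to the nodes of a
Kripke frame, monotone with respect to inclusion. -/
structure SoundAssignment (K : Type u) [Preorder K] where
  M : K → ZSet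
  transitive : ∀ v, (M v).IsTransitive
  modelsZF : ∀ v, ModelsZF (M v)
  mono : ∀ ⦃v w : K⦄, v ≤ w → M v ⊆ M w

/-- Forcing in the Kripke model with classical domains `K(𝓜)` arising from a sound
assignment: domains are the `𝓜_v` and `e_v` is true membership restricted to `𝓜_v`. -/
def SoundAssignment.Forces {K : Type u} [Preorder K] (𝓜 : SoundAssignment K)
    (v : K) (env : ℕ → ZSet) (φ : SetF) : Prop :=
  SForces (fun v => {x : ZSet | x ∈ 𝓜.M v})
    (fun v a b => a ∈ b ∧ a ∈ 𝓜.M v ∧ b ∈ 𝓜.M v) v env φ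

/-- `K(𝓜) ⊩ φ` : the formula `φ` is forced at every node, for all parameters. -/
def SoundAssignment.ForcesAll {K : Type u} [Preorder K] (𝓜 : SoundAssignment K)
    (φ : SetF) : Prop :=
  ∀ (v : K) (env : ℕ → ZSet), (∀ n, env n ∈ 𝓜.M v) → 𝓜.Forces v env φ


/-! ## Propositional logic and its Kripke semantics -/

/-- Propositional formulas. -/
inductive PForm : Type where
  | atom : ℕ → PForm
  | bot : PForm
  | and : PForm → PForm → PForm
  | or  : PForm → PForm → PForm
  | imp : PForm → PForm → PForm

namespace PForm
def neg (φ : PForm) : PForm := .imp φ .bot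
end PForm

/-- The propositional forcing relation over a Kripke frame with valuation `V`. -/
def PForces {K : Type u} [Preorder K] (V : ℕ → Set K) : K → PForm → Prop
  | v, .atom n => v ∈ V n
  | _, .bot => False
  | v, .and φ ψ => PForces V v φ ∧ PForces V v ψ
  | v, .or φ ψ => PForces V v φ ∨ PForces V v ψ
  | v, .imp φ ψ => ∀ w, v ≤ w → PForces V w φ → PForces V w ψ

/-- A valuation is persistent if each `V p` is upward closed. -/
def PersistentVal {K : Type u} [Preorder K] (V : ℕ → Set K) : Prop :=
  ∀ (n : ℕ) ⦃v w : K⦄, v ≤ w → v ∈ V n → w ∈ V n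

/-- A Kripke frame: a partially ordered set. -/
structure KFrame : Type 1 where
  World : Type
  [ord : PartialOrder World]

attribute [instance] KFrame.ord

/-- A propositional formula is valid on a frame if it is forced at every node under
every persistent valuation. -/
def PValidOnFrame (F : KFrame) (φ : PForm) : Prop :=
  ∀ V : ℕ → Set F.World, PersistentVal V → ∀ v : F.World, PForces V v φ

/-- The propositional logic of a class of Kripke frames. -/
def PLogicOfFrames (𝓒 : Set KFrame) : Set PForm :=
  {φ | ∀ F ∈ 𝓒, PValidOnFrame F φ}

/-- Intuitionistic propositional logic (the logic of all Kripke frames). -/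
def IPC : Set PForm := {φ | ∀ F : KFrame, PValidOnFrame F φ}

/-- Classical evaluation of a propositional formula. -/
def PEval (f : ℕ → Prop) : PForm → Prop
  | .atom n => f n
  | .bot => False
  | .and φ ψ => PEval f φ ∧ PEval f ψ
  | .or φ ψ => PEval f φ ∨ PEval f ψ
  | .imp φ ψ => PEval f φ → PEval f ψ

/-- Classical propositional logic. -/
def CPC : Set PForm := {φ | ∀ f : ℕ → Prop, PEval f φ}

/-- A propositional logic is Kripke-complete if it is the logic of some class of
Kripke frames. -/
def PKripkeComplete (J : Set PForm) : Prop := ∃ 𝓒 : Set KFrame, J = PLogicOfFrames 𝓒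

/-- An intermediate propositional logic: `IPC ⊆ J ⊆ CPC`. -/
def IntermediatePLogic (J : Set PForm) : Prop := IPC ⊆ J ∧ J ⊆ CPC

/-! ### Propositional translations into the language of set theory -/

/-- A propositional translation assigns a set-theoretic sentence to every
propositional letter. -/
def IsPropTranslation (σ : ℕ → SetF) : Prop := ∀ n, SetF.Sentence (σ n)

/-- Extension of a propositional translation to all propositional formulas. -/
def ptrans (σ : ℕ → SetF) : PForm → SetF
  | .atom n => σ n
  | .bot => .bot
  | .and φ ψ => .and (ptrans σ φ) (ptrans σ ψ)
  | .or φ ψ => .or (ptrans σ φ) (ptrans σ ψ)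
  | .imp φ ψ => .imp (ptrans σ φ) (ptrans σ ψ)

/-- `T(J)` for a propositional logic `J`: the theory `T` together with all translations
of theorems of `J`. -/
def PTheoryOf (T : Set SetF) (J : Set PForm) : Set SetF :=
  T ∪ {F | ∃ A ∈ J, ∃ σ : ℕ → SetF, IsPropTranslation σ ∧ F = ptrans σ A}

/-- The propositional logic `L(S)` of a set theory `S`. -/
def PLogicOfTheory (S : Set SetF) : Set PForm :=
  {φ | ∀ σ : ℕ → SetF, IsPropTranslation σ → Prf S (ptrans σ φ)}

/-- The Σ₃-restricted propositional logic `L^{Σ₃}(S)` of a set theory `S`. -/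
def PLogicOfTheorySigma3 (S : Set SetF) : Set PForm :=
  {φ | ∀ σ : ℕ → SetF, IsPropTranslation σ → (∀ n, Sigma3 (σ n)) →
        Prf S (ptrans σ φ)}

/-! ## First-order logic in a relational language (without equality) -/

/-- A purely relational first-order language: a type of relation symbols with
arities. -/
structure Lang : Type 1 where
  R : Type
  ar : R → ℕ

/-- First-order formulas over a relational language `L` (de Bruijn indices,
no equality). -/
inductive QForm (L : Lang) : Type where
  | rel : (r : L.R) → (Fin (L.ar r) → ℕ) → QForm L
  | bot : QForm L
  | and : QForm L → QForm L → QForm L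
  | or  : QForm L → QForm L → QForm L
  | imp : QForm L → QForm L → QForm L
  | ex  : QForm L → QForm L
  | all : QForm L → QForm L

namespace QForm

variable {L : Lang}

def neg (φ : QForm L) : QForm L := .imp φ .bot

def rename (f : ℕ → ℕ) : QForm L → QForm L
  | rel r v => rel r (fun i => f (v i))
  | bot => bot
  | and φ ψ => and (rename f φ) (rename f ψ)
  | or φ ψ => or (rename f φ) (rename f ψ)
  | imp φ ψ => imp (rename f φ) (rename f ψ)
  | ex φ => ex (rename (SetF.liftR f) φ)
  | all φ => all (rename (SetF.liftR f) φ)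

def shift (φ : QForm L) : QForm L := rename Nat.succ φ

def instVar (k : ℕ) (φ : QForm L) : QForm L :=
  rename (fun n => match n with | 0 => k | m + 1 => m) φ

end QForm

/-- Natural deduction for intuitionistic first-order logic (no equality) over a
relational language `L`. -/
inductive QPrf {L : Lang} : Set (QForm L) → QForm L → Prop where
  | hyp {Γ φ} : φ ∈ Γ → QPrf Γ φ
  | botE {Γ φ} : QPrf Γ .bot → QPrf Γ φ
  | andI {Γ φ ψ} : QPrf Γ φ → QPrf Γ ψ → QPrf Γ (.and φ ψ)
  | andE₁ {Γ φ ψ} : QPrf Γ (.and φ ψ) → QPrf Γ φ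
  | andE₂ {Γ φ ψ} : QPrf Γ (.and φ ψ) → QPrf Γ ψ
  | orI₁ {Γ φ ψ} : QPrf Γ φ → QPrf Γ (.or φ ψ)
  | orI₂ {Γ φ ψ} : QPrf Γ ψ → QPrf Γ (.or φ ψ)
  | orE {Γ φ ψ χ} : QPrf Γ (.or φ ψ) → QPrf (insert φ Γ) χ → QPrf (insert ψ Γ) χ → QPrf Γ χ
  | impI {Γ φ ψ} : QPrf (insert φ Γ) ψ → QPrf Γ (.imp φ ψ)
  | impE {Γ φ ψ} : QPrf Γ (.imp φ ψ) → QPrf Γ φ → QPrf Γ ψ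
  | allI {Γ φ} : QPrf (QForm.shift '' Γ) φ → QPrf Γ (.all φ)
  | allE {Γ φ} (k : ℕ) : QPrf Γ (.all φ) → QPrf Γ (φ.instVar k)
  | exI {Γ φ} (k : ℕ) : QPrf Γ (φ.instVar k) → QPrf Γ (.ex φ)
  | exE {Γ φ ψ} : QPrf Γ (.ex φ) → QPrf (insert φ (QForm.shift '' Γ)) ψ.shift → QPrf Γ ψ

/-- Intuitionistic first-order logic `IQC` over the language `L`. -/
def IQC (L : Lang) : Set (QForm L) := {φ | QPrf ∅ φ}

/-! ### Kripke models for `IQC` -/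

/-- A Kripke model for intuitionistic first-order logic over the relational language
`L`: increasing (nonempty) domains and increasing interpretations of the relation
symbols on the domains. -/
structure QModel (L : Lang) (K : Type u) [Preorder K] (α : Type v) where
  D : K → Set α
  I : (v : K) → (r : L.R) → ((Fin (L.ar r) → α) → Prop)
  D_ne : ∀ v, (D v).Nonempty
  D_mono : ∀ ⦃v w : K⦄, v ≤ w → D v ⊆ D w
  I_mono : ∀ ⦃v w : K⦄, v ≤ w → ∀ r t, I v r t → I w r t
  I_dom : ∀ v r t, I v r t → ∀ i, t i ∈ D v

/-- The forcing relation in a Kripke model for `IQC`. -/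
def QForces {L : Lang} {K : Type u} [Preorder K] {α : Type v} (M : QModel L K α) :
    K → (ℕ → α) → QForm L → Prop
  | v, env, .rel r t => M.I v r (fun i => env (t i))
  | _, _, .bot => False
  | v, env, .and φ ψ => QForces M v env φ ∧ QForces M v env ψ
  | v, env, .or φ ψ => QForces M v env φ ∨ QForces M v env ψ
  | v, env, .imp φ ψ => ∀ w, v ≤ w → QForces M w env φ → QForces M w env ψ
  | v, env, .ex φ => ∃ a, a ∈ M.D v ∧ QForces M v (econs a env) φ
  | v, env, .all φ => ∀ w, v ≤ w → ∀ a, a ∈ M.D w → QForces M w (econs a env) φ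

/-- Validity of a first-order formula in all Kripke models whose underlying frame
satisfies a property `P`. -/
def QValidOnFrames (L : Lang) (P : KFrame → Prop) (φ : QForm L) : Prop :=
  ∀ F : KFrame, P F → ∀ (α : Type) (M : QModel L F.World α) (v : F.World)
    (env : ℕ → α), (∀ n, env n ∈ M.D v) → QForces M v env φ

/-- The frame has depth at most `k`: there is no strictly increasing chain of more
than `k` nodes. -/
def FrameDepthLE (k : ℕ) (F : KFrame) : Prop :=
  ∀ f : Fin (k + 1) → F.World, ¬ StrictMono f

/-- The frame is linearly ordered. -/
def FrameLinear (F : KFrame) : Prop := ∀ a b : F.World, a ≤ b ∨ b ≤ a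

/-- `QHP_k`: the first-order logic of Kripke frames of depth at most `k`. -/
def QHP (L : Lang) (k : ℕ) : Set (QForm L) := {φ | QValidOnFrames L (FrameDepthLE k) φ}

/-- `QLC`: the first-order logic of linear Kripke frames. -/
def QLCLogic (L : Lang) : Set (QForm L) := {φ | QValidOnFrames L FrameLinear φ}

/-- The instances of the scheme `KF`: `¬¬∀x(P(x) ∨ ¬P(x))`. -/
def KFScheme (L : Lang) : Set (QForm L) :=
  {F | ∃ ψ : QForm L, F = QForm.neg (QForm.neg (.all (.or ψ (QForm.neg ψ))))}

/-- The logic `IQC + KF`. -/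
def IQCKF (L : Lang) : Set (QForm L) := {φ | QPrf (KFScheme L) φ}

/-- Classical (Tarski) satisfaction of a first-order formula. -/
def TSat {L : Lang} {α : Type v} (I : (r : L.R) → (Fin (L.ar r) → α) → Prop) :
    (ℕ → α) → QForm L → Prop
  | env, .rel r t => I r (fun i => env (t i))
  | _, .bot => False
  | env, .and φ ψ => TSat I env φ ∧ TSat I env ψ
  | env, .or φ ψ => TSat I env φ ∨ TSat I env ψ
  | env, .imp φ ψ => TSat I env φ → TSat I env ψ
  | env, .ex φ => ∃ a : α, TSat I (econs a env) φ
  | env, .all φ => ∀ a : α, TSat I (econs a env) φ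

/-- Classical first-order logic `CQC` over the language `L`. -/
def CQC (L : Lang) : Set (QForm L) :=
  {φ | ∀ (α : Type), Nonempty α →
    ∀ (I : (r : L.R) → (Fin (L.ar r) → α) → Prop) (env : ℕ → α), TSat I env φ}

/-! ### First-order translations into the language of set theory -/

/-- A first-order translation maps every `n`-ary relation symbol to a set-theoretic
formula with (at most) `n` free variables. -/
def IsQTranslation (L : Lang) (σ : (r : L.R) → SetF) : Prop :=
  ∀ r, SetF.ClosedUnder (L.ar r) (σ r)

/-- Extension of a first-order translation to all first-order formulas. -/
def qtrans {L : Lang} (σ : (r : L.R) → SetF) : QForm L → SetF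
  | .rel r v => (σ r).rename (fun i => if h : i < L.ar r then v ⟨i, h⟩ else i)
  | .bot => .bot
  | .and φ ψ => .and (qtrans σ φ) (qtrans σ ψ)
  | .or φ ψ => .or (qtrans σ φ) (qtrans σ ψ)
  | .imp φ ψ => .imp (qtrans σ φ) (qtrans σ ψ)
  | .ex φ => .ex (qtrans σ φ)
  | .all φ => .all (qtrans σ φ)

/-- The relative translation `(φ^E)^σ`: quantifiers are relativised to the fresh
unary predicate `E`, whose interpretation under the translation is the set-theoretic
formula `ε` (with free variable `0`). -/
def relTrans {L : Lang} (ε : SetF) (σ : (r : L.R) → SetF) : QForm L → SetF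
  | .rel r v => (σ r).rename (fun i => if h : i < L.ar r then v ⟨i, h⟩ else i)
  | .bot => .bot
  | .and φ ψ => .and (relTrans ε σ φ) (relTrans ε σ ψ)
  | .or φ ψ => .or (relTrans ε σ φ) (relTrans ε σ ψ)
  | .imp φ ψ => .imp (relTrans ε σ φ) (relTrans ε σ ψ)
  | .ex φ => .ex (.and ε (relTrans ε σ φ))
  | .all φ => .all (.imp ε (relTrans ε σ φ))

/-- The first-order logic `QL(T)` of a set theory `T`. -/
def QL (L : Lang) (T : Set SetF) : Set (QForm L) :=
  {φ | ∀ σ, IsQTranslation L σ → Prf T (qtrans σ φ)}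

/-- The relative first-order logic `QL_E(T)` of a set theory `T`. -/
def QLE (L : Lang) (T : Set SetF) : Set (QForm L) :=
  {φ | ∀ (ε : SetF) (σ : (r : L.R) → SetF), SetF.ClosedUnder 1 ε →
        IsQTranslation L σ → Prf T (relTrans ε σ φ)}

/-- The Σ₃-restricted relative first-order logic `QL_E^{Σ₃}(T)` of a set theory `T`. -/
def QLESigma3 (L : Lang) (T : Set SetF) : Set (QForm L) :=
  {φ | ∀ (ε : SetF) (σ : (r : L.R) → SetF), SetF.ClosedUnder 1 ε → Sigma3 ε →
        IsQTranslation L σ → (∀ r, Sigma3 (σ r)) → Prf T (relTrans ε σ φ)}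

/-- The `C`-restricted first-order logic `QL^C(T)` of a set theory `T`:
only translations whose values lie in the class `C` are considered. -/
def QLRestr (L : Lang) (C : Set SetF) (T : Set SetF) : Set (QForm L) :=
  {φ | ∀ σ, IsQTranslation L σ → (∀ r, σ r ∈ C) → Prf T (qtrans σ φ)}

/-- `T(J)` for a first-order logic `J`: the theory `T` together with all translations
of theorems of `J`. -/
def QTheoryOf (L : Lang) (T : Set SetF) (J : Set (QForm L)) : Set SetF :=
  T ∪ {F | ∃ A ∈ J, ∃ σ, IsQTranslation L σ ∧ F = qtrans σ A}

/-! ## First-order logic with equality in a relational language -/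

/-- First-order formulas with equality over a relational language `L`. -/
inductive QEForm (L : Lang) : Type where
  | rel : (r : L.R) → (Fin (L.ar r) → ℕ) → QEForm L
  | eq : ℕ → ℕ → QEForm L
  | bot : QEForm L
  | and : QEForm L → QEForm L → QEForm L
  | or  : QEForm L → QEForm L → QEForm L
  | imp : QEForm L → QEForm L → QEForm L
  | ex  : QEForm L → QEForm L
  | all : QEForm L → QEForm L

namespace QEForm

variable {L : Lang}

def neg (φ : QEForm L) : QEForm L := .imp φ .bot

def rename (f : ℕ → ℕ) : QEForm L → QEForm L
  | rel r v => rel r (fun i => f (v i))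
  | eq i j => eq (f i) (f j)
  | bot => bot
  | and φ ψ => and (rename f φ) (rename f ψ)
  | or φ ψ => or (rename f φ) (rename f ψ)
  | imp φ ψ => imp (rename f φ) (rename f ψ)
  | ex φ => ex (rename (SetF.liftR f) φ)
  | all φ => all (rename (SetF.liftR f) φ)

def shift (φ : QEForm L) : QEForm L := rename Nat.succ φ

def instVar (k : ℕ) (φ : QEForm L) : QEForm L :=
  rename (fun n => match n with | 0 => k | m + 1 => m) φ

end QEForm

/-- Natural deduction for intuitionistic first-order logic with equality over a
relational language `L`. -/
inductive QEPrf {L : Lang} : Set (QEForm L) → QEForm L → Prop where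
  | hyp {Γ φ} : φ ∈ Γ → QEPrf Γ φ
  | botE {Γ φ} : QEPrf Γ .bot → QEPrf Γ φ
  | andI {Γ φ ψ} : QEPrf Γ φ → QEPrf Γ ψ → QEPrf Γ (.and φ ψ)
  | andE₁ {Γ φ ψ} : QEPrf Γ (.and φ ψ) → QEPrf Γ φ
  | andE₂ {Γ φ ψ} : QEPrf Γ (.and φ ψ) → QEPrf Γ ψ
  | orI₁ {Γ φ ψ} : QEPrf Γ φ → QEPrf Γ (.or φ ψ)
  | orI₂ {Γ φ ψ} : QEPrf Γ ψ → QEPrf Γ (.or φ ψ)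
  | orE {Γ φ ψ χ} : QEPrf Γ (.or φ ψ) → QEPrf (insert φ Γ) χ → QEPrf (insert ψ Γ) χ →
      QEPrf Γ χ
  | impI {Γ φ ψ} : QEPrf (insert φ Γ) ψ → QEPrf Γ (.imp φ ψ)
  | impE {Γ φ ψ} : QEPrf Γ (.imp φ ψ) → QEPrf Γ φ → QEPrf Γ ψ
  | allI {Γ φ} : QEPrf (QEForm.shift '' Γ) φ → QEPrf Γ (.all φ)
  | allE {Γ φ} (k : ℕ) : QEPrf Γ (.all φ) → QEPrf Γ (φ.instVar k)
  | exI {Γ φ} (k : ℕ) : QEPrf Γ (φ.instVar k) → QEPrf Γ (.ex φ)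
  | exE {Γ φ ψ} : QEPrf Γ (.ex φ) → QEPrf (insert φ (QEForm.shift '' Γ)) ψ.shift →
      QEPrf Γ ψ
  | eqRefl {Γ} (i : ℕ) : QEPrf Γ (.eq i i)
  | eqSym {Γ i j} : QEPrf Γ (.eq i j) → QEPrf Γ (.eq j i)
  | eqTrans {Γ i j k} : QEPrf Γ (.eq i j) → QEPrf Γ (.eq j k) → QEPrf Γ (.eq i k)
  | relCong {Γ} {r : L.R} {v : Fin (L.ar r) → ℕ} {p : Fin (L.ar r)} {i j : ℕ} :
      QEPrf Γ (.eq i j) → QEPrf Γ (.rel r v) → v p = i →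
      QEPrf Γ (.rel r (Function.update v p j))

/-- Intuitionistic first-order logic with equality `IQC⁼` over the language `L`. -/
def IQCeq (L : Lang) : Set (QEForm L) := {φ | QEPrf ∅ φ}

/-- Extension of a first-order equality translation (which sends equality to
equality) to all first-order formulas with equality. -/
def qetrans {L : Lang} (σ : (r : L.R) → SetF) : QEForm L → SetF
  | .rel r v => (σ r).rename (fun i => if h : i < L.ar r then v ⟨i, h⟩ else i)
  | .eq i j => .eq i j
  | .bot => .bot
  | .and φ ψ => .and (qetrans σ φ) (qetrans σ ψ)
  | .or φ ψ => .or (qetrans σ φ) (qetrans σ ψ)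
  | .imp φ ψ => .imp (qetrans σ φ) (qetrans σ ψ)
  | .ex φ => .ex (qetrans σ φ)
  | .all φ => .all (qetrans σ φ)

/-- The first-order logic with equality `QL⁼(T)` of a set theory `T`. -/
def QLeq (L : Lang) (T : Set SetF) : Set (QEForm L) :=
  {φ | ∀ σ, IsQTranslation L σ → Prf T (qetrans σ φ)}

/-- The full countable relational language, with countably many relation symbols of
every arity. -/
def FullLang : Lang := ⟨ℕ × ℕ, Prod.snd⟩


section ExpAux

variable {K : Type} [Preorder K] (𝓜 : SoundAssignment K)

@[simp] lemma econs_zero {α : Type*} (a : α) (env : ℕ → α) : econs a env 0 = a := rfl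
@[simp] lemma econs_succ {α : Type*} (a : α) (env : ℕ → α) (n : ℕ) :
    econs a env (n + 1) = env n := rfl

lemma memTrans {u : K} {x y : ZSet} (hy : y ∈ 𝓜.M u) (hx : x ∈ y) : x ∈ 𝓜.M u :=
  (𝓜.transitive u).mem_trans hx hy

lemma forces_sing_iff {u : K} {env : ℕ → ZSet} {i j : ℕ}
    (hi : env i ∈ 𝓜.M u) (hj : env j ∈ 𝓜.M u) :
    𝓜.Forces u env (Axioms.isSingV i j) ↔ env i = {env j} := by
  simp only [SoundAssignment.Forces, Axioms.isSingV, SForces, Set.mem_setOf_eq,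
    econs_zero, econs_succ]
  constructor
  · rintro ⟨h1, hji, -, -⟩
    ext t
    simp only [ZFSet.mem_singleton]
    constructor
    · intro ht
      exact h1 u le_rfl t (memTrans 𝓜 hi ht) u le_rfl ⟨ht, memTrans 𝓜 hi ht, hi⟩
    · rintro rfl; exact hji
  · intro hs
    refine ⟨?_, ?_, hj, hi⟩
    · rintro w hw t ht w' hw' ⟨htm, -, -⟩
      rw [hs] at htm
      exact ZFSet.mem_singleton.mp htm
    · rw [hs]; exact ZFSet.mem_singleton.mpr rfl

lemma forces_upair_iff {u : K} {env : ℕ → ZSet} {i j k : ℕ}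
    (hi : env i ∈ 𝓜.M u) (hj : env j ∈ 𝓜.M u) (hk : env k ∈ 𝓜.M u) :
    𝓜.Forces u env (Axioms.isUPairV i j k) ↔ env i = {env j, env k} := by
  simp only [SoundAssignment.Forces, Axioms.isUPairV, SForces, Set.mem_setOf_eq,
    econs_zero, econs_succ]
  constructor
  · rintro ⟨h1, ⟨hji, -, -⟩, ⟨hki, -, -⟩⟩
    ext t
    simp only [ZFSet.mem_pair]
    constructor
    · intro ht
      exact h1 u le_rfl t (memTrans 𝓜 hi ht) u le_rfl ⟨ht, memTrans 𝓜 hi ht, hi⟩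
    · rintro (rfl | rfl); exacts [hji, hki]
  · intro hs
    refine ⟨?_, ⟨?_, hj, hi⟩, ⟨?_, hk, hi⟩⟩
    · rintro w hw t ht w' hw' ⟨htm, -, -⟩
      rw [hs] at htm
      exact ZFSet.mem_pair.mp htm
    · rw [hs]; exact ZFSet.mem_pair.mpr (Or.inl rfl)
    · rw [hs]; exact ZFSet.mem_pair.mpr (Or.inr rfl)

lemma mem_opair_iff {x y t : ZSet} :
    t ∈ ZFSet.pair x y ↔ t = {x} ∨ t = {x, y} := by
  simp [ZFSet.pair, ZFSet.mem_pair]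

lemma forces_opair_iff {u : K} {env : ℕ → ZSet} {p a b : ℕ}
    (hp : env p ∈ 𝓜.M u) (ha : env a ∈ 𝓜.M u) (hb : env b ∈ 𝓜.M u) :
    𝓜.Forces u env (Axioms.isOPairV p a b) ↔ env p = ZFSet.pair (env a) (env b) := by
  have keysing : ∀ (w : K), u ≤ w → ∀ t : ZSet, t ∈ 𝓜.M w →
      (𝓜.Forces w (econs t env) (Axioms.isSingV 0 (a + 1)) ↔ t = {env a}) := by
    intro w hw t ht
    simpa using forces_sing_iff 𝓜 (env := econs t env) (i := 0) (j := a + 1) ht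
      (𝓜.mono hw ha)
  have keyup : ∀ (w : K), u ≤ w → ∀ t : ZSet, t ∈ 𝓜.M w →
      (𝓜.Forces w (econs t env) (Axioms.isUPairV 0 (a + 1) (b + 1)) ↔
        t = {env a, env b}) := by
    intro w hw t ht
    simpa using forces_upair_iff 𝓜 (env := econs t env) (i := 0) (j := a + 1)
      (k := b + 1) ht (𝓜.mono hw ha) (𝓜.mono hw hb)
  simp only [SoundAssignment.Forces] at keysing keyup ⊢
  simp only [Axioms.isOPairV, SForces, Set.mem_setOf_eq, econs_zero, econs_succ]
  constructor
  · rintro ⟨h1, ⟨s, hsD, ⟨hsp, -, -⟩, hs⟩, ⟨t, htD, ⟨htp, -, -⟩, ht⟩⟩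
    have hs' : s = {env a} := (keysing u le_rfl s hsD).mp hs
    have ht' : t = {env a, env b} := (keyup u le_rfl t htD).mp ht
    ext z
    rw [mem_opair_iff]
    constructor
    · intro hz
      have hzM : z ∈ 𝓜.M u := memTrans 𝓜 hp hz
      rcases h1 u le_rfl z hzM u le_rfl ⟨hz, hzM, hp⟩ with h | h
      · exact Or.inl ((keysing u le_rfl z hzM).mp h)
      · exact Or.inr ((keyup u le_rfl z hzM).mp h)
    · rintro (rfl | rfl)
      · rw [← hs']; exact hsp
      · rw [← ht']; exact htp
  · intro hpair
    have hsM : ({env a} : ZSet) ∈ 𝓜.M u := by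
      refine memTrans 𝓜 hp ?_
      rw [hpair, mem_opair_iff]; exact Or.inl rfl
    have htM : ({env a, env b} : ZSet) ∈ 𝓜.M u := by
      refine memTrans 𝓜 hp ?_
      rw [hpair, mem_opair_iff]; exact Or.inr rfl
    refine ⟨?_, ⟨{env a}, hsM, ⟨?_, hsM, hp⟩, (keysing u le_rfl _ hsM).mpr rfl⟩,
      ⟨{env a, env b}, htM, ⟨?_, htM, hp⟩, (keyup u le_rfl _ htM).mpr rfl⟩⟩
    · rintro w hw z hz w' hw' ⟨hzp, hzM', -⟩
      rw [hpair, mem_opair_iff] at hzp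
      rcases hzp with rfl | rfl
      · exact Or.inl ((keysing w' (hw.trans hw') _ hzM').mpr rfl)
      · exact Or.inr ((keyup w' (hw.trans hw') _ hzM').mpr rfl)
    · rw [hpair, mem_opair_iff]; exact Or.inl rfl
    · rw [hpair, mem_opair_iff]; exact Or.inr rfl

lemma forces_appV_iff {u : K} {env : ℕ → ZSet} {f n m : ℕ}
    (hf : env f ∈ 𝓜.M u) (hn : env n ∈ 𝓜.M u) (hm : env m ∈ 𝓜.M u) :
    𝓜.Forces u env (Axioms.appV f n m) ↔ ZFSet.pair (env n) (env m) ∈ env f := by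
  have key : ∀ q : ZSet, q ∈ 𝓜.M u →
      (𝓜.Forces u (econs q env) (Axioms.isOPairV 0 (n + 1) (m + 1)) ↔
        q = ZFSet.pair (env n) (env m)) := by
    intro q hq
    simpa using forces_opair_iff 𝓜 (env := econs q env) (p := 0) (a := n + 1)
      (b := m + 1) hq hn hm
  simp only [SoundAssignment.Forces] at key ⊢
  simp only [Axioms.appV, SForces, Set.mem_setOf_eq, econs_zero, econs_succ]
  constructor
  · rintro ⟨q, hqD, ⟨hqf, -, -⟩, hq⟩
    rw [(key q hqD).mp hq] at hqf
    exact hqf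
  · intro hpf
    have hqM : ZFSet.pair (env n) (env m) ∈ 𝓜.M u := memTrans 𝓜 hf hpf
    exact ⟨_, hqM, ⟨hpf, hqM, hf⟩, (key _ hqM).mpr rfl⟩

lemma forces_isFunFromTo {u : K} {env : ℕ → ZSet} {f a b : ℕ}
    (hf : env f ∈ 𝓜.M u) (ha : env a ∈ 𝓜.M u) (hb : env b ∈ 𝓜.M u)
    (hfun : ZFSet.IsFunc (env a) (env b) (env f)) :
    𝓜.Forces u env (Axioms.isFunFromTo f a b) := by
  simp only [SoundAssignment.Forces]
  simp only [Axioms.isFunFromTo, SForces, Set.mem_setOf_eq, econs_zero, econs_succ]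
  refine ⟨?_, ?_, ?_⟩
  · -- every element of f is a pair ⟨x,y⟩ with x ∈ a, y ∈ b
    rintro u1 h1 p hp u2 h2 ⟨hpf, hpM, hfM⟩
    have haM : env a ∈ 𝓜.M u2 := 𝓜.mono (h1.trans h2) ha
    have hbM : env b ∈ 𝓜.M u2 := 𝓜.mono (h1.trans h2) hb
    have hpprod : p ∈ ZFSet.prod (env a) (env b) := hfun.1 hpf
    rcases ZFSet.mem_prod.mp hpprod with ⟨x, hx, y, hy, rfl⟩
    have hxM : x ∈ 𝓜.M u2 := memTrans 𝓜 haM hx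
    have hyM : y ∈ 𝓜.M u2 := memTrans 𝓜 hbM hy
    refine ⟨x, hxM, ⟨hx, hxM, haM⟩, y, hyM, ⟨hy, hyM, hbM⟩, ?_⟩
    have := (forces_opair_iff 𝓜 (u := u2)
      (env := econs y (econs x (econs (ZFSet.pair x y) env))) (p := 2) (a := 1) (b := 0)
      (by simpa using hpM) (by simpa using hxM) (by simpa using hyM)).mpr (by simp)
    simpa only [SoundAssignment.Forces] using this
  · -- totality
    rintro u1 h1 x hx u2 h2 ⟨hxa, hxM, haM⟩
    have hfM : env f ∈ 𝓜.M u2 := 𝓜.mono (h1.trans h2) hf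
    have hbM : env b ∈ 𝓜.M u2 := 𝓜.mono (h1.trans h2) hb
    obtain ⟨y, hy, -⟩ := hfun.2 x hxa
    have hyb : y ∈ env b := (ZFSet.pair_mem_prod.mp (hfun.1 hy)).2
    have hyM : y ∈ 𝓜.M u2 := memTrans 𝓜 hbM hyb
    have hqM : ZFSet.pair x y ∈ 𝓜.M u2 := memTrans 𝓜 hfM hy
    refine ⟨y, hyM, ⟨hyb, hyM, hbM⟩, ZFSet.pair x y, hqM, ⟨hy, hqM, hfM⟩, ?_⟩
    have := (forces_opair_iff 𝓜 (u := u2)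
      (env := econs (ZFSet.pair x y) (econs y (econs x env))) (p := 0) (a := 2) (b := 1)
      (by simpa using hqM) (by simpa using hxM) (by simpa using hyM)).mpr (by simp)
    simpa only [SoundAssignment.Forces] using this
  · -- uniqueness
    rintro u1 h1 x hx u2 h2 ⟨hxa, hxM, -⟩ u3 h3 y hy u4 h4 ⟨hyb, hyM, -⟩
      u5 h5 y' hy' u6 h6 ⟨hy'b, hy'M, -⟩ u7 h7 ⟨happ1, happ2⟩
    have hu : u2 ≤ u7 := (h3.trans (h4.trans (h5.trans (h6.trans h7))))
    have hfM : env f ∈ 𝓜.M u7 :=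
      𝓜.mono (h1.trans (h2.trans hu)) hf
    have hxM7 : x ∈ 𝓜.M u7 := 𝓜.mono hu hxM
    have hyM7 : y ∈ 𝓜.M u7 := 𝓜.mono ((h5.trans (h6.trans h7))) hyM
    have hy'M7 : y' ∈ 𝓜.M u7 := 𝓜.mono h7 hy'M
    have e1 : ZFSet.pair x y ∈ env f := by
      have := (forces_appV_iff 𝓜 (u := u7)
        (env := econs y' (econs y (econs x env))) (f := f + 3) (n := 2) (m := 1)
        (by simpa using hfM) (by simpa using hxM7) (by simpa using hyM7)).mp
        (by simpa only [SoundAssignment.Forces] using happ1)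
      simpa using this
    have e2 : ZFSet.pair x y' ∈ env f := by
      have := (forces_appV_iff 𝓜 (u := u7)
        (env := econs y' (econs y (econs x env))) (f := f + 3) (n := 2) (m := 0)
        (by simpa using hfM) (by simpa using hxM7) (by simpa using hy'M7)).mp
        (by simpa only [SoundAssignment.Forces] using happ2)
      simpa using this
    obtain ⟨z, -, hz⟩ := hfun.2 x hxa
    exact (hz y e1).trans (hz y' e2).symm

end ExpAux

/-- If `v < w`, `a, b ∈ 𝓜_v`, and `g : a → b` is a function that
belongs to `𝓜_w` but not to `𝓜_v`, then the Kripke model with classical domains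
does not force the Exponentiation axiom. -/
theorem exponentiation_not_forced {K : Type} [PartialOrder K]
    (𝓜 : SoundAssignment K) (v w : K) (hvw : v < w) (a b g : ZSet)
    (ha : a ∈ 𝓜.M v) (hb : b ∈ 𝓜.M v) (hg : ZFSet.IsFunc a b g)
    (hgw : g ∈ 𝓜.M w) (hgv : g ∉ 𝓜.M v) :
    ¬ 𝓜.ForcesAll Axioms.expAx := by
  intro hF
  have hvw' : v ≤ w := le_of_lt hvw
  have h0 := hF v (fun _ => a) (fun _ => ha)
  simp only [SoundAssignment.Forces, Axioms.expAx, SForces, SetF.biimp,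
    Set.mem_setOf_eq, econs_zero, econs_succ] at h0
  obtain ⟨z, hzM, h3⟩ := h0 v le_rfl a ha v le_rfl b hb
  have h4 := h3 w hvw' g hgw
  have h5 : 𝓜.Forces w (econs g (econs z (econs b (econs a (fun _ => a)))))
      (Axioms.isFunFromTo 0 3 2) := by
    refine forces_isFunFromTo 𝓜 ?_ ?_ ?_ ?_
    · simpa using hgw
    · simpa using 𝓜.mono hvw' ha
    · simpa using 𝓜.mono hvw' hb
    · simpa using hg
  have h6 := h4.2 w le_rfl (by simpa only [SoundAssignment.Forces] using h5)
  exact hgv (memTrans 𝓜 hzM h6.1)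

end IKP2007
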